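/- arXiv:math/0401324 — 2 statements merged into one kernel-verified Lean document; each statement's English description precedes it below -/
import Mathlib

section
/- (Artin) The Hurwitz action of the braid group B_n is transitive on the set Red_R(g) of n-tuples (r_1,…,r_n) of conjugates of the free generators f_1,…,f_n of the free group F_n such that r_1 r_2 ⋯ r_n = f_1 f_2 ⋯ f_n. -/
/-- The elementary Hurwitz move `σ_i` on `n`-tuples of a group `G`
(0-indexed: acts on entries `i` and `i+1`). -/
def hmove (n : ℕ) (G : Type*) [Group G] (i : ℕ) (hi : i + 1 < n)
    (g : Fin n → G) : Fin n → G := fun j =>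
  if (j : ℕ) = i then g ⟨i, by omega⟩ * g ⟨i + 1, hi⟩ * (g ⟨i, by omega⟩)⁻¹
  else if (j : ℕ) = i + 1 then g ⟨i, by omega⟩
  else g j

/-- One elementary step of the Hurwitz action. -/
def hstep (n : ℕ) (G : Type*) [Group G] (a b : Fin n → G) : Prop :=
  ∃ (i : ℕ) (hi : i + 1 < n), b = hmove n G i hi a

/-- Braid relations: generators `σ_1, …, σ_{n-1}` indexed by `Fin (n-1)`. -/
def braidRels (n : ℕ) : Set (FreeGroup (Fin (n - 1))) :=
  { r | (∃ i j : Fin (n - 1), (i : ℕ) + 1 = (j : ℕ) ∧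
          r = FreeGroup.of i * FreeGroup.of j * FreeGroup.of i *
            (FreeGroup.of j * FreeGroup.of i * FreeGroup.of j)⁻¹) ∨
        (∃ i j : Fin (n - 1), (i : ℕ) + 1 < (j : ℕ) ∧
          r = FreeGroup.of i * FreeGroup.of j * (FreeGroup.of j * FreeGroup.of i)⁻¹) }

/-- The braid group `B_n`. -/
abbrev BraidGroup (n : ℕ) := PresentedGroup (braidRels n)

/-- Relations of the universal Coxeter group: each generator squares to 1. -/
def coxRels (n : ℕ) : Set (FreeGroup (Fin n)) :=
  { r | ∃ i, r = FreeGroup.of i * FreeGroup.of i }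

/-- The universal Coxeter group `W_n`. -/
abbrev UCox (n : ℕ) := PresentedGroup (coxRels n)

/-- The generator `s_i` of `W_n`. -/
def sgen {n : ℕ} (i : Fin n) : UCox n := PresentedGroup.of i

/-- The Coxeter element `c = s_1 ⋯ s_n`. -/
def coxElt (n : ℕ) : UCox n := (List.ofFn fun i => sgen i).prod

/-- The set `T` of reflections of `W_n`: conjugates of generators. -/
def Refl (n : ℕ) : Set (UCox n) := { t | ∃ w i, t = w * sgen i * w⁻¹ }

/-- `Red_T(c)`: `n`-tuples of reflections with product `c`. -/
def RedT (n : ℕ) : Set (Fin n → UCox n) :=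
  { t | (∀ i, t i ∈ Refl n) ∧ (List.ofFn t).prod = coxElt n }

/-- The set `R` of braid reflections of the free group: conjugates of generators. -/
def Rset (n : ℕ) : Set (FreeGroup (Fin n)) :=
  { r | ∃ w i, r = w * FreeGroup.of i * w⁻¹ }

/-- `g = f_1 ⋯ f_n`. -/
def gElt (n : ℕ) : FreeGroup (Fin n) := (List.ofFn fun i => FreeGroup.of i).prod

/-- `Red_R(g)`: `n`-tuples from `R` with product `g`. -/
def RedR (n : ℕ) : Set (Fin n → FreeGroup (Fin n)) :=
  { t | (∀ i, t i ∈ Rset n) ∧ (List.ofFn t).prod = gElt n }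

/-- The canonical projection `π : F_n → W_n`, `f_i ↦ s_i`. -/
def pr (n : ℕ) : FreeGroup (Fin n) →* UCox n := FreeGroup.lift fun i => sgen i

/-- Length of an element of `W_n`: the length of its normal form. -/
noncomputable def wordLength {n : ℕ} (w : UCox n) : ℕ :=
  sInf { m | ∃ l : List (Fin n),
    List.Chain' (· ≠ ·) l ∧ l.length = m ∧ (l.map sgen).prod = w }

/-!
Write each reflection as `r_i = x_i f_{a_i} x_i⁻¹` with the reduced word of `x_i` not ending in
`f_{a_i}^{±1}`, so that `|r_i| = 2|x_i| + 1`, and induct on `∑ |r_i|`. If some `σ_i^{±1}` shortens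
the tuple, apply it. Otherwise `x_i f_{a_i}⁻¹` is not a prefix of `x_{i+1}` and
`x_{i+1} f_{a_{i+1}}` is not a prefix of `x_i`, which is exactly what prevents the letters
`f_{a_i}` from cancelling in `r_1 ⋯ r_n = x_1 f_{a_1} (x_1⁻¹ x_2) f_{a_2} ⋯ f_{a_n} x_n⁻¹`. Then
`n = |g| = |x_1| + n + ∑ |x_i⁻¹ x_{i+1}| + |x_n|`, so every `x_i` is trivial and `a_i = i`.
-/

theorem List.exists_common_prefix {β : Type*} :
    ∀ l₁ l₂ : List β, ∃ c t₁ t₂, l₁ = c ++ t₁ ∧ l₂ = c ++ t₂ ∧ ∀ p ∈ t₁.head?, p ∉ t₂.head?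
  | a :: l₁, b :: l₂ => by
    by_cases hab : a = b
    · obtain ⟨c, t₁, t₂, rfl, rfl, h⟩ := List.exists_common_prefix l₁ l₂
      exact ⟨a :: c, t₁, t₂, rfl, by rw [hab]; rfl, h⟩
    · exact ⟨[], a :: l₁, b :: l₂, rfl, rfl, by simpa [eq_comm] using hab⟩
  | [], l₂ => ⟨[], [], l₂, rfl, rfl, by simp⟩
  | l₁, [] => ⟨[], l₁, [], rfl, rfl, by simp⟩

theorem List.prod_eq_prod_take_mul_mul_prod_drop {M : Type*} [Monoid M] (L : List M) (i : ℕ)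
    (hi : i + 1 < L.length) :
    L.prod = (L.take i).prod * (L[i] * L[i + 1]) * (L.drop (i + 2)).prod := by
  conv_lhs => rw [← L.take_append_drop (i + 2)]
  rw [List.prod_append, List.prod_take_succ _ _ hi, List.prod_take_succ _ _ (by omega),
    mul_assoc _ L[i]]

theorem Fintype.sum_update_add {ι M : Type*} [Fintype ι] [DecidableEq ι] [AddCommMonoid M]
    (f : ι → M) (j : ι) (b : M) : ∑ i, Function.update f j b i + f j = ∑ i, f i + b := by
  rw [Finset.sum_update_of_mem (Finset.mem_univ j), ← Finset.add_sum_erase _ f (Finset.mem_univ j),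
    Finset.sdiff_singleton_eq_erase]
  abel

namespace FreeGroup

variable {α : Type*}

theorem head?_invRev (L : List (α × Bool)) :
    (invRev L).head? = L.getLast?.map fun p => (p.1, !p.2) := by
  simp [invRev, List.head?_reverse]

theorem getLast?_invRev (L : List (α × Bool)) :
    (invRev L).getLast? = L.head?.map fun p => (p.1, !p.2) := by
  simp [invRev, List.getLast?_reverse]

theorem inv_mk_singleton_false (a : α) : (mk [(a, false)])⁻¹ = of a := by
  simp [inv_mk, invRev, of]

theorem commute_mk_singleton_of (a : α) (β : Bool) : Commute (mk [(a, β)]) (of a) := by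
  cases β
  · rw [← inv_inv (mk _), inv_mk_singleton_false]
    exact (Commute.refl _).inv_left
  · exact Commute.refl _

theorem IsReduced.append_singleton_of_notMem_getLast? {L : List (α × Bool)} {a : α}
    (hL : IsReduced L) (h : (a, false) ∉ L.getLast?) : IsReduced (L ++ [(a, true)]) := by
  refine List.isChain_append.2 ⟨hL, .singleton _, fun ⟨b, β⟩ hp q hq => ?_⟩
  obtain rfl : q = (a, true) := by simpa using hq.symm
  rintro rfl
  cases β
  · exact absurd hp h
  · rfl

theorem IsReduced.cons_of_notMem_head? {L : List (α × Bool)} {a : α} (hL : IsReduced L)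
    (h : (a, false) ∉ L.head?) : IsReduced ((a, true) :: L) := by
  refine List.isChain_append (l₁ := [_]) |>.2 ⟨.singleton _, hL, fun p hp ⟨b, β⟩ hq => ?_⟩
  obtain rfl : p = (a, true) := by simpa using hp.symm
  rintro rfl
  cases β
  · exact absurd hq h
  · rfl

def reflection (d : FreeGroup α × α) : FreeGroup α := d.1 * of d.2 * d.1⁻¹

theorem inv_mul_prod_map_reflection_cons (x y : FreeGroup α) (b : α)
    (l : List (FreeGroup α × α)) :
    x⁻¹ * (((y, b) :: l).map reflection).prod =
      x⁻¹ * y * of b * (y⁻¹ * (l.map reflection).prod) := by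
  simp only [List.map_cons, List.prod_cons, reflection]
  group

variable [DecidableEq α]

theorem toWord_mk_of_isReduced {L : List (α × Bool)} (h : IsReduced L) : (mk L).toWord = L := by
  rw [toWord_mk, h.reduce_eq]

theorem toWord_mul_of_mul {u v : FreeGroup α} {a : α} (hu : (a, false) ∉ u.toWord.getLast?)
    (hv : (a, false) ∉ v.toWord.head?) :
    (u * of a * v).toWord = u.toWord ++ (a, true) :: v.toWord := by
  have h := IsReduced.append_overlap (L₃ := v.toWord)
    (isReduced_toWord.append_singleton_of_notMem_getLast? hu)
    (isReduced_toWord.cons_of_notMem_head? hv) (List.cons_ne_nil _ _)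
  conv_lhs => rw [← mk_toWord (x := u), ← mk_toWord (x := v), of, mul_mk, mul_mk]
  rw [toWord_mk_of_isReduced h, List.append_assoc, List.singleton_append]

/-- The first letter of `x⁻¹ y` either cancels the last letter of `x` or extends `x` inside `y`. -/
theorem mem_head?_toWord_inv_mul {x y : FreeGroup α} {p : α × Bool}
    (hp : p ∈ (x⁻¹ * y).toWord.head?) :
    (p.1, !p.2) ∈ x.toWord.getLast? ∨ x.toWord ++ [p] <+: y.toWord := by
  obtain ⟨c, v, u, hx, hy, hvu⟩ := List.exists_common_prefix x.toWord y.toWord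
  have hred : IsReduced (invRev v ++ u) := by
    refine List.isChain_append.2 ⟨?_, ?_, fun q hq q' hq' hqq' => ?_⟩
    · have h : IsReduced x⁻¹.toWord := isReduced_toWord
      rw [toWord_inv, hx, invRev_append] at h
      exact h.infix (List.prefix_append _ _).isInfix
    · exact (hy ▸ isReduced_toWord : IsReduced (c ++ u)).infix (List.suffix_append _ _).isInfix
    · rw [getLast?_invRev, Option.mem_map] at hq
      obtain ⟨⟨b, β⟩, hb, rfl⟩ := hq
      obtain ⟨b', β'⟩ := q'
      have := hvu _ hb
      cases β <;> cases β' <;> simp_all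
  have hmk : x⁻¹ * y = mk (invRev v ++ u) := by
    rw [← mk_toWord (x := x), ← mk_toWord (x := y), hx, hy, ← mul_mk, ← mul_mk, ← mul_mk,
      ← inv_mk]
    group
  rw [hmk, toWord_mk_of_isReduced hred] at hp
  rcases v.eq_nil_or_concat with rfl | ⟨v', q, rfl⟩
  · obtain ⟨u', rfl⟩ : ∃ u', u = p :: u' := by
      cases u with
      | nil => simp at hp
      | cons q u' => exact ⟨u', by simpa [eq_comm] using hp⟩
    exact Or.inr ⟨u', by simp [hx, hy]⟩
  · obtain rfl : p = (q.1, !q.2) := by simpa [invRev, eq_comm] using hp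
    left
    simp [hx]

theorem norm_mul_lt_of_prefix {u z : FreeGroup α} {p : α × Bool}
    (h : u.toWord ++ [p] <+: z.toWord) : norm (u * (mk [p])⁻¹ * u⁻¹ * z) < norm z := by
  obtain ⟨w, hw⟩ := h
  have hz : z = u * mk [p] * mk w := by
    rw [← mk_toWord (x := z), ← hw, ← mul_mk, ← mul_mk, mk_toWord]
  have hnorm : norm z = norm u + 1 + w.length := by
    simp only [norm, ← hw, List.length_append, List.length_singleton]
  calc norm (u * (mk [p])⁻¹ * u⁻¹ * z) = norm (u * mk w) := by rw [hz]; group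
    _ ≤ norm u + w.length := (norm_mul_le _ _).trans (Nat.add_le_add_left norm_mk_le _)
    _ < norm z := by omega

def IsReducedConjugator (x : FreeGroup α) (a : α) : Prop :=
  ∀ p ∈ x.toWord.getLast?, p.1 ≠ a

theorem exists_isReducedConjugator (w : FreeGroup α) (a : α) :
    ∃ x, IsReducedConjugator x a ∧ x * of a * x⁻¹ = w * of a * w⁻¹ := by
  obtain ⟨x, hx, hmin⟩ :=
    (measure norm).wf.has_min {x | x * of a * x⁻¹ = w * of a * w⁻¹} ⟨w, rfl⟩
  refine ⟨x, fun ⟨b, β⟩ hp hba => hmin (mk x.toWord.dropLast) ?_ ?_, hx⟩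
  · set y := mk x.toWord.dropLast
    obtain rfl : b = a := hba
    have hsplit : x = y * mk [(b, β)] := by
      rw [mul_mk, List.dropLast_append_getLast? _ hp, mk_toWord]
    calc y * of b * y⁻¹ = y * (mk [(b, β)] * of b) * (mk [(b, β)])⁻¹ * y⁻¹ := by
          rw [(commute_mk_singleton_of b β).eq]; group
      _ = w * of b * w⁻¹ := by rw [← hx, hsplit]; group
  · calc norm (mk x.toWord.dropLast) ≤ x.toWord.dropLast.length := norm_mk_le
      _ < norm x := by
        have : x.toWord ≠ [] := by rintro h; simp [h] at hp
        simp [norm, List.length_dropLast, List.length_pos_iff.2 this]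

namespace IsReducedConjugator

variable {x y : FreeGroup α} {a b : α}

theorem norm_conj (h : IsReducedConjugator x a) : norm (x * of a * x⁻¹) = 2 * norm x + 1 := by
  have hlast : (a, false) ∉ x.toWord.getLast? := fun hp => h _ hp rfl
  have hhead : (a, false) ∉ x⁻¹.toWord.head? := by
    rw [toWord_inv, head?_invRev, Option.mem_map]
    rintro ⟨p, hp, hpa⟩
    exact h p hp (congrArg Prod.fst hpa)
  rw [norm, toWord_mul_of_mul hlast hhead]
  simp only [toWord_inv, List.length_append, List.length_cons, invRev_length, norm]
  omega

theorem norm_conj_lt {c : FreeGroup α} (h : IsReducedConjugator x a)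
    (hc : norm (c * x) < norm x) :
    norm (c * (x * of a * x⁻¹) * c⁻¹) < norm (x * of a * x⁻¹) := by
  calc norm (c * (x * of a * x⁻¹) * c⁻¹) = norm ((c * x) * of a * (c * x)⁻¹) := by group
    _ ≤ norm (c * x) + 1 + norm (c * x) := by
      refine (norm_mul_le _ _).trans ?_
      rw [norm_inv_eq]
      exact Nat.add_le_add_right ((norm_mul_le _ _).trans (by rw [norm_of])) _
    _ < norm (x * of a * x⁻¹) := by rw [h.norm_conj]; omega

theorem notMem_head?_toWord_inv_mul (hx : IsReducedConjugator x a)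
    (h : ¬ x.toWord ++ [(a, false)] <+: y.toWord) : (a, false) ∉ (x⁻¹ * y).toWord.head? := by
  intro hp
  rcases mem_head?_toWord_inv_mul hp with h' | h'
  · exact hx _ h' rfl
  · exact h h'

theorem notMem_getLast?_toWord_inv_mul (hy : IsReducedConjugator y b)
    (h : ¬ y.toWord ++ [(b, true)] <+: x.toWord) : (b, false) ∉ (x⁻¹ * y).toWord.getLast? := by
  rw [← inv_inv (x⁻¹ * y), toWord_inv, getLast?_invRev, mul_inv_rev, inv_inv, Option.mem_map]
  rintro ⟨⟨c, γ⟩, hq, hqb⟩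
  obtain ⟨rfl, rfl⟩ : c = b ∧ γ = true := by simpa using hqb
  rcases mem_head?_toWord_inv_mul hq with h' | h'
  · exact hy _ h' rfl
  · exact h h'

end IsReducedConjugator

/-- For reduced conjugators, this keeps the middle letters of `reflection d` and `reflection e`
from cancelling in their product. -/
def NoCancellation (d e : FreeGroup α × α) : Prop :=
  ¬ d.1.toWord ++ [(d.2, false)] <+: e.1.toWord ∧ ¬ e.1.toWord ++ [(e.2, true)] <+: d.1.toWord

theorem noCancellation_of_norm_le {d e : FreeGroup α × α} (hd : IsReducedConjugator d.1 d.2)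
    (he : IsReducedConjugator e.1 e.2)
    (h₁ : norm (reflection e) ≤ norm (reflection d * reflection e * (reflection d)⁻¹))
    (h₂ : norm (reflection d) ≤ norm ((reflection e)⁻¹ * reflection d * reflection e)) :
    NoCancellation d e := by
  constructor
  · intro hpre
    have hc : d.1 * (mk [(d.2, false)])⁻¹ * d.1⁻¹ = reflection d := by
      rw [inv_mk_singleton_false]
      rfl
    exact absurd h₁ (not_le.2 (he.norm_conj_lt (hc ▸ norm_mul_lt_of_prefix hpre)))
  · intro hpre
    have hc : e.1 * (mk [(e.2, true)])⁻¹ * e.1⁻¹ = (reflection e)⁻¹ := by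
      simp only [reflection, mul_inv_rev, inv_inv, mul_assoc]
      rfl
    have := hd.norm_conj_lt (hc ▸ norm_mul_lt_of_prefix hpre)
    rw [inv_inv] at this
    exact absurd h₂ (not_le.2 this)

section NoCancellationChain

variable {l : List (FreeGroup α × α)} {x y : FreeGroup α} {a b : α}

theorem notMem_head?_toWord_inv_mul_prod_map_reflection (hx : IsReducedConjugator x a)
    (hl : ∀ d ∈ l, IsReducedConjugator d.1 d.2)
    (hchain : ((x, a) :: l).IsChain NoCancellation) :
    (a, false) ∉ (x⁻¹ * (l.map reflection).prod).toWord.head? := by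
  induction l generalizing x a with
  | nil =>
    rw [List.map_nil, List.prod_nil, mul_one, toWord_inv, head?_invRev, Option.mem_map]
    rintro ⟨p, hp, hpa⟩
    exact hx p hp (congrArg Prod.fst hpa)
  | cons e l ih =>
    obtain ⟨y, b⟩ := e
    have hy := hl _ List.mem_cons_self
    obtain ⟨⟨hxy, hyx⟩, hchain'⟩ := List.isChain_cons_cons.1 hchain
    rw [inv_mul_prod_map_reflection_cons, toWord_mul_of_mul (hy.notMem_getLast?_toWord_inv_mul hyx)
      (ih hy (fun d hd => hl d (List.mem_cons_of_mem _ hd)) hchain')]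
    have := hx.notMem_head?_toWord_inv_mul hxy
    revert this
    cases (x⁻¹ * y).toWord <;> simp

theorem norm_inv_mul_prod_map_reflection_cons (hy : IsReducedConjugator y b)
    (hl : ∀ d ∈ l, IsReducedConjugator d.1 d.2) (hchain : ((y, b) :: l).IsChain NoCancellation)
    (hyx : ¬ y.toWord ++ [(b, true)] <+: x.toWord) :
    norm (x⁻¹ * (((y, b) :: l).map reflection).prod) =
      norm (x⁻¹ * y) + 1 + norm (y⁻¹ * (l.map reflection).prod) := by
  rw [inv_mul_prod_map_reflection_cons, norm,
    toWord_mul_of_mul (hy.notMem_getLast?_toWord_inv_mul hyx)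
      (notMem_head?_toWord_inv_mul_prod_map_reflection hy hl hchain)]
  simp only [List.length_append, List.length_cons, norm]
  omega

theorem length_le_norm_inv_mul_prod_map_reflection (hl : ∀ d ∈ l, IsReducedConjugator d.1 d.2)
    (hchain : l.IsChain NoCancellation)
    (hx : ∀ e ∈ l.head?, ¬ e.1.toWord ++ [(e.2, true)] <+: x.toWord) :
    l.length ≤ norm (x⁻¹ * (l.map reflection).prod) := by
  induction l generalizing x with
  | nil => simp
  | cons e l ih =>
    obtain ⟨y, b⟩ := e
    have hl' := fun d hd => hl d (List.mem_cons_of_mem _ hd)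
    obtain ⟨hy_next, hchain'⟩ := List.isChain_cons.1 hchain
    rw [norm_inv_mul_prod_map_reflection_cons (y := y) (b := b) (hl _ List.mem_cons_self) hl' hchain
      (hx _ rfl)]
    have := ih (x := y) hl' hchain' fun e he => (hy_next e he).2
    simp only [List.length_cons]
    omega

theorem eq_one_of_norm_inv_mul_prod_map_reflection_le (hl : ∀ d ∈ l, IsReducedConjugator d.1 d.2)
    (hchain : l.IsChain NoCancellation)
    (hx : ∀ e ∈ l.head?, ¬ e.1.toWord ++ [(e.2, true)] <+: x.toWord)
    (h : norm (x⁻¹ * (l.map reflection).prod) ≤ l.length) : x = 1 ∧ ∀ d ∈ l, d.1 = 1 := by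
  induction l generalizing x with
  | nil => simpa using h
  | cons e l ih =>
    obtain ⟨y, b⟩ := e
    have hl' := fun d hd => hl d (List.mem_cons_of_mem _ hd)
    obtain ⟨hy_next, hchain'⟩ := List.isChain_cons.1 hchain
    have hy_next' : ∀ e ∈ l.head?, ¬ e.1.toWord ++ [(e.2, true)] <+: y.toWord :=
      fun e he => (hy_next e he).2
    rw [norm_inv_mul_prod_map_reflection_cons (y := y) (b := b) (hl _ List.mem_cons_self) hl'
      hchain (hx _ rfl), List.length_cons] at h
    have hlen := length_le_norm_inv_mul_prod_map_reflection (x := y) hl' hchain' hy_next'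
    obtain ⟨rfl, hl_one⟩ := ih (x := y) hl' hchain' hy_next' (by omega)
    have hx_one : x⁻¹ * 1 = 1 := norm_eq_zero.1 (by omega)
    refine ⟨by simpa using hx_one, ?_⟩
    rintro d (_ | ⟨_, hd⟩)
    exacts [rfl, hl_one d hd]

theorem eq_one_of_norm_prod_map_reflection_le (hl : ∀ d ∈ l, IsReducedConjugator d.1 d.2)
    (hchain : l.IsChain NoCancellation) (h : norm (l.map reflection).prod ≤ l.length) :
    ∀ d ∈ l, d.1 = 1 :=
  (eq_one_of_norm_inv_mul_prod_map_reflection_le (x := 1) hl hchain (by simp)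
    (by simpa using h)).2

end NoCancellationChain

theorem toWord_prod_map_of (L : List α) :
    (L.map of).prod.toWord = L.map fun a => (a, true) := by
  have : (L.map of).prod = mk (L.map fun a => (a, true)) := by
    induction L with
    | nil => rfl
    | cons a L ih => rw [List.map_cons, List.prod_cons, ih, of, mul_mk]; rfl
  rw [this, toWord_mk_of_isReduced
    (List.pairwise_map.2 (List.pairwise_of_forall fun _ _ _ => rfl)).isChain]

theorem prod_map_of_injective : Function.Injective fun L : List α => (L.map of).prod := by
  intro L M h
  have := congrArg toWord h
  simp only [toWord_prod_map_of] at this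
  exact List.map_injective_iff.2 (fun a b hab => (Prod.mk.inj hab).1) this

end FreeGroup

section HurwitzMoves

variable {n : ℕ} {G : Type*} [Group G]

def hmoveInv (n : ℕ) (G : Type*) [Group G] (i : ℕ) (hi : i + 1 < n) (g : Fin n → G) :
    Fin n → G :=
  Function.update (Function.update g ⟨i, by omega⟩ (g ⟨i + 1, hi⟩)) ⟨i + 1, hi⟩
    ((g ⟨i + 1, hi⟩)⁻¹ * g ⟨i, by omega⟩ * g ⟨i + 1, hi⟩)

theorem hmove_eq_update (i : ℕ) (hi : i + 1 < n) (g : Fin n → G) :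
    hmove n G i hi g = Function.update (Function.update g ⟨i, by omega⟩
      (g ⟨i, by omega⟩ * g ⟨i + 1, hi⟩ * (g ⟨i, by omega⟩)⁻¹)) ⟨i + 1, hi⟩ (g ⟨i, by omega⟩) := by
  funext j
  simp only [hmove, Function.update_apply, Fin.ext_iff]
  split_ifs <;> first | rfl | omega

theorem hmove_hmoveInv (i : ℕ) (hi : i + 1 < n) (g : Fin n → G) :
    hmove n G i hi (hmoveInv n G i hi g) = g := by
  funext ⟨j, hj⟩
  simp only [hmove, hmoveInv, Function.update_apply, Fin.ext_iff]
  split_ifs <;> subst_vars <;> first | omega | rfl | group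

theorem prod_ofFn_hmove (i : ℕ) (hi : i + 1 < n) (g : Fin n → G) :
    (List.ofFn (hmove n G i hi g)).prod = (List.ofFn g).prod := by
  have htake : (List.ofFn (hmove n G i hi g)).take i = (List.ofFn g).take i := by
    refine List.ext_getElem (by simp) fun j hj _ => ?_
    simp only [List.length_take, List.length_ofFn] at hj
    simp only [List.getElem_take, List.getElem_ofFn, hmove]
    rw [if_neg (by omega), if_neg (by omega)]
  have hdrop : (List.ofFn (hmove n G i hi g)).drop (i + 2) = (List.ofFn g).drop (i + 2) := by
    refine List.ext_getElem (by simp) fun j hj _ => ?_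
    simp only [List.getElem_drop, List.getElem_ofFn, hmove]
    rw [if_neg (by omega), if_neg (by omega)]
  rw [List.prod_eq_prod_take_mul_mul_prod_drop _ i (by simpa using hi),
    List.prod_eq_prod_take_mul_mul_prod_drop (List.ofFn g) i (by simpa using hi), htake, hdrop]
  simp [hmove]

theorem sum_comp_hmove (μ : G → ℕ) (i : ℕ) (hi : i + 1 < n) (g : Fin n → G) :
    ∑ j, μ (hmove n G i hi g j) + μ (g ⟨i + 1, hi⟩) =
      ∑ j, μ (g j) + μ (g ⟨i, by omega⟩ * g ⟨i + 1, hi⟩ * (g ⟨i, by omega⟩)⁻¹) := by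
  have h₁ := Fintype.sum_update_add (μ ∘ Function.update g ⟨i, by omega⟩
    (g ⟨i, by omega⟩ * g ⟨i + 1, hi⟩ * (g ⟨i, by omega⟩)⁻¹)) ⟨i + 1, hi⟩ (μ (g ⟨i, by omega⟩))
  have h₂ := Fintype.sum_update_add (μ ∘ g) ⟨i, by omega⟩
    (μ (g ⟨i, by omega⟩ * g ⟨i + 1, hi⟩ * (g ⟨i, by omega⟩)⁻¹))
  have hne : (⟨i + 1, hi⟩ : Fin n) ≠ ⟨i, by omega⟩ := by simp [Fin.ext_iff]
  simp only [← Function.comp_update, Function.comp_apply, Function.update_of_ne hne] at h₁ h₂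
  rw [hmove_eq_update]
  omega

theorem sum_comp_hmoveInv (μ : G → ℕ) (i : ℕ) (hi : i + 1 < n) (g : Fin n → G) :
    ∑ j, μ (hmoveInv n G i hi g j) + μ (g ⟨i, by omega⟩) =
      ∑ j, μ (g j) + μ ((g ⟨i + 1, hi⟩)⁻¹ * g ⟨i, by omega⟩ * g ⟨i + 1, hi⟩) := by
  have h₁ := Fintype.sum_update_add (μ ∘ Function.update g ⟨i, by omega⟩ (g ⟨i + 1, hi⟩))
    ⟨i + 1, hi⟩ (μ ((g ⟨i + 1, hi⟩)⁻¹ * g ⟨i, by omega⟩ * g ⟨i + 1, hi⟩))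
  have h₂ := Fintype.sum_update_add (μ ∘ g) ⟨i, by omega⟩ (μ (g ⟨i + 1, hi⟩))
  have hne : (⟨i + 1, hi⟩ : Fin n) ≠ ⟨i, by omega⟩ := by simp [Fin.ext_iff]
  simp only [← Function.comp_update, Function.comp_apply, Function.update_of_ne hne] at h₁ h₂
  rw [hmoveInv]
  omega

def IsHurwitzMinimal (μ : G → ℕ) (g : Fin n → G) : Prop :=
  ∀ i (hi : i + 1 < n),
    μ (g ⟨i + 1, hi⟩) ≤ μ (g ⟨i, by omega⟩ * g ⟨i + 1, hi⟩ * (g ⟨i, by omega⟩)⁻¹) ∧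
    μ (g ⟨i, by omega⟩) ≤ μ ((g ⟨i + 1, hi⟩)⁻¹ * g ⟨i, by omega⟩ * g ⟨i + 1, hi⟩)

theorem eqvGen_hstep_of_isHurwitzMinimal {S : Set (Fin n → G)} (μ : G → ℕ) (b : Fin n → G)
    (hS : ∀ g ∈ S, ∀ i (hi : i + 1 < n), hmove n G i hi g ∈ S ∧ hmoveInv n G i hi g ∈ S)
    (hmin : ∀ g ∈ S, IsHurwitzMinimal μ g → g = b) :
    ∀ g ∈ S, Relation.EqvGen (hstep n G) g b := by
  intro g hg
  induction hm : ∑ j, μ (g j) using Nat.strong_induction_on generalizing g with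
  | _ m ih =>
  by_cases hg_min : IsHurwitzMinimal μ g
  · rw [hmin g hg hg_min]
    exact .refl _
  obtain ⟨i, hi, h⟩ := not_forall₂.1 hg_min
  rcases not_and_or.1 h with h | h
  · have := sum_comp_hmove μ i hi g
    exact .trans _ _ _ (.rel _ _ ⟨i, hi, rfl⟩) (ih _ (by omega) _ (hS g hg i hi).1 rfl)
  · have := sum_comp_hmoveInv μ i hi g
    exact .trans _ _ _ (.symm _ _ (.rel _ _ ⟨i, hi, (hmove_hmoveInv i hi g).symm⟩))
      (ih _ (by omega) _ (hS g hg i hi).2 rfl)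

end HurwitzMoves

section Artin

open FreeGroup

variable {n : ℕ}

theorem conj_mem_Rset {r : FreeGroup (Fin n)} (hr : r ∈ Rset n) (w : FreeGroup (Fin n)) :
    w * r * w⁻¹ ∈ Rset n := by
  obtain ⟨v, i, rfl⟩ := hr
  exact ⟨w * v, i, by group⟩

theorem hmove_mem_RedR {t : Fin n → FreeGroup (Fin n)} (ht : t ∈ RedR n) (i : ℕ) (hi : i + 1 < n) :
    hmove n _ i hi t ∈ RedR n := by
  refine ⟨fun j => ?_, by rw [prod_ofFn_hmove]; exact ht.2⟩
  simp only [hmove]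
  split_ifs
  exacts [conj_mem_Rset (ht.1 _) _, ht.1 _, ht.1 _]

theorem hmoveInv_mem_RedR {t : Fin n → FreeGroup (Fin n)} (ht : t ∈ RedR n) (i : ℕ)
    (hi : i + 1 < n) : hmoveInv n _ i hi t ∈ RedR n := by
  refine ⟨fun j => ?_, by rw [← prod_ofFn_hmove i hi, hmove_hmoveInv]; exact ht.2⟩
  simp only [hmoveInv, Function.update_apply]
  split_ifs
  exacts [by simpa using conj_mem_Rset (ht.1 _) (t ⟨i + 1, hi⟩)⁻¹, ht.1 _, ht.1 _]

theorem gElt_eq_prod_map_of (n : ℕ) : gElt n = ((List.ofFn id).map of).prod := by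
  rw [List.map_ofFn]
  rfl

theorem norm_gElt (n : ℕ) : FreeGroup.norm (gElt n) = n := by
  rw [gElt_eq_prod_map_of, FreeGroup.norm, toWord_prod_map_of]
  simp

theorem eq_of_mem_RedR_of_isHurwitzMinimal {t : Fin n → FreeGroup (Fin n)} (ht : t ∈ RedR n)
    (hmin : IsHurwitzMinimal FreeGroup.norm t) : t = fun i => of i := by
  have hdata : ∀ i, ∃ d : FreeGroup (Fin n) × Fin n,
      IsReducedConjugator d.1 d.2 ∧ t i = reflection d := fun i => by
    obtain ⟨w, a, hw⟩ := ht.1 i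
    obtain ⟨x, hx, hxw⟩ := exists_isReducedConjugator w a
    exact ⟨(x, a), hx, by rw [hw, ← hxw]; rfl⟩
  choose d hd htd using hdata
  obtain rfl : t = fun i => reflection (d i) := funext htd
  have hchain : (List.ofFn d).IsChain NoCancellation := List.isChain_ofFn.2 fun i hi =>
    noCancellation_of_norm_le (hd _) (hd _) (hmin i hi).1 (hmin i hi).2
  have hprod : ((List.ofFn d).map reflection).prod = gElt n := by
    rw [List.map_ofFn]
    exact ht.2
  have hone : ∀ i, (d i).1 = 1 := fun i =>
    eq_one_of_norm_prod_map_reflection_le (by simpa using hd) hchain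
      (by rw [hprod, norm_gElt, List.length_ofFn]) (d i) (List.mem_ofFn.2 ⟨i, rfl⟩)
  have hrefl : ∀ i, reflection (d i) = of (d i).2 := fun i => by simp [reflection, hone i]
  have hletters : (List.ofFn fun i => (d i).2) = List.ofFn id := prod_map_of_injective <| by
    beta_reduce
    rw [← gElt_eq_prod_map_of, ← hprod]
    simp only [List.map_ofFn, Function.comp_def, hrefl]
  funext i
  rw [hrefl, congrFun (List.ofFn_injective hletters) i]
  rfl

end Artin

/-- (Artin) The Hurwitz action of `B_n` is transitive on `Red_R(g)`,
the `n`-tuples of conjugates of the free generators with product `g = f_1 ⋯ f_n`. -/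
theorem hurwitz_transitive_RedR (n : ℕ) :
    ∀ a ∈ RedR n, ∀ b ∈ RedR n, Relation.EqvGen (hstep n (FreeGroup (Fin n))) a b := by
  have h : ∀ t ∈ RedR n, Relation.EqvGen (hstep n _) t fun i => FreeGroup.of i :=
    eqvGen_hstep_of_isHurwitzMinimal FreeGroup.norm (fun i => FreeGroup.of i)
    (fun t ht i hi => ⟨hmove_mem_RedR ht i hi, hmoveInv_mem_RedR ht i hi⟩)
    (fun t ht hmin => eq_of_mem_RedR_of_isHurwitzMinimal ht hmin)
  intro a ha b hb
  exact (h a ha).trans _ _ _ (h b hb).symm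
end

section
/- Let W_n be the universal Coxeter group with normal-form length function ℓ. Suppose (u_1,…,u_k, s, u_k,…,u_1) and (v_1,…,v_l, s', v_l,…,v_1) are normal forms of two reflections t and t', and suppose that in some cancellation process applied to the concatenation of these normal forms, the central letter s is cancelled. Then ℓ(s u_k⋯u_1 v_1⋯v_l) < l - k; in particular k < l. -/
theorem List.exists_free_reduction_append {α : Type*} {x v : List α}
    (hx : IsChain (· ≠ ·) x) (hv : IsChain (· ≠ ·) v) :
    ∃ x₀ p v₀, x = x₀ ++ p ∧ v = p.reverse ++ v₀ ∧ IsChain (· ≠ ·) (x₀ ++ v₀) := by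
  induction v generalizing x with
  | nil => exact ⟨x, [], [], by simp, rfl, by simpa using hx⟩
  | cons b v ih =>
    by_cases hlast : x.getLast? = some b
    · obtain ⟨x', rfl⟩ := getLast?_eq_some_iff.mp hlast
      obtain ⟨x₀, p, v₀, rfl, rfl, hred⟩ := ih hx.left_of_append hv.tail
      exact ⟨x₀, p ++ [b], v₀, by simp, by simp, hred⟩
    · refine ⟨x, [], b :: v, by simp, rfl, isChain_append.mpr ⟨hx, hv, ?_⟩⟩
      rintro a ha c ⟨⟩ rfl
      exact hlast ha

theorem sgen_mul_self {n : ℕ} (i : Fin n) : sgen i * sgen i = 1 :=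
  (QuotientGroup.eq_one_iff _).mpr (Subgroup.subset_normalClosure ⟨i, rfl⟩)

theorem prod_reverse_map_sgen {n : ℕ} (l : List (Fin n)) :
    (l.map sgen).reverse.prod = (l.map sgen).prod⁻¹ := by
  simp [List.prod_inv_reverse, Function.comp_def, inv_eq_of_mul_eq_one_right (sgen_mul_self _)]

theorem wordLength_le_length {n : ℕ} {l : List (Fin n)} (hl : l.IsChain (· ≠ ·)) :
    wordLength (l.map sgen).prod ≤ l.length :=
  Nat.sInf_le ⟨l, hl, rfl, rfl⟩

/-- Key cancellation lemma: if `(s, u_k, …, u_1)` and `(v_1, …, v_l)` are normal forms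
and every execution of the cancellation procedure on `(s, u_k, …, u_1, v_1, …, v_l)`
cancels the leading letter `s` (equivalently: the normal form of `u_k ⋯ u_1 v_1 ⋯ v_l`
starts with `s`), then `ℓ(s u_k ⋯ u_1 v_1 ⋯ v_l) < l - k`; in particular `k < l`. -/
theorem cancellation_length_bound (n : ℕ) (u v : List (Fin n)) (s0 : Fin n)
    (hu : List.Chain' (· ≠ ·) (s0 :: u.reverse))
    (hv : List.Chain' (· ≠ ·) v)
    (hcancel : ∀ m : List (Fin n), List.Chain' (· ≠ ·) m →
      (m.map sgen).prod = ((u.reverse ++ v).map sgen).prod → m.head? = some s0) :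
    wordLength (((s0 :: (u.reverse ++ v)).map sgen).prod) + u.length < v.length := by
  obtain ⟨x₀, p, v₀, hx, rfl, hred⟩ :=
    List.exists_free_reduction_append (x := u.reverse) hu.tail hv
  have hhead := hcancel _ hred (by simp [hx, prod_reverse_map_sgen])
  obtain rfl : x₀ = [] := by
    rcases x₀ with _ | ⟨c, x₀⟩
    · rfl
    · obtain rfl : c = s0 := by simpa using hhead
      rw [hx, List.cons_append] at hu
      exact absurd rfl (List.isChain_cons_cons.mp hu).1
  obtain ⟨v₁, rfl⟩ := List.head?_eq_some_iff.mp hhead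
  obtain rfl : p = u.reverse := hx.symm
  have hprod : ((s0 :: (u.reverse ++ (u.reverse.reverse ++ s0 :: v₁))).map sgen).prod
      = (v₁.map sgen).prod := by
    simp [prod_reverse_map_sgen, ← mul_assoc, sgen_mul_self]
  rw [hprod]
  have := wordLength_le_length (l := v₁) hv.right_of_append.tail
  simp only [List.reverse_reverse, List.length_append, List.length_cons]
  omega
end
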